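/- Let C be a category with all morphisms monic. An ind-object Ω of C that is universal (every object of C embeds into Ω) is f-injective if and only if it is homogeneous (every isomorphism γ : X → Y between objects of C, together with embeddings α : X → Ω and β : Y → Ω, can be intertwined by an automorphism σ of Ω satisfying σ ∘ α = β ∘ γ). -/

import Mathlib

open CategoryTheory

universe u v

/-- An ind-object of a category `C`: a sequential diagram `X₁ → X₂ → ⋯` in `C`. -/
structure IndObject (C : Type u) [Category.{v} C] where
  obj : ℕ → C
  map : ∀ n : ℕ, obj n ⟶ obj (n + 1)

namespace IndObject

variable {C : Type u} [Category.{v} C]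

/-- The transition morphism `obj n ⟶ obj m` of an ind-object, for `n ≤ m`. -/
def trans (Ω : IndObject C) : ∀ {n m : ℕ}, n ≤ m → (Ω.obj n ⟶ Ω.obj m) :=
  fun {n m} h =>
    Nat.leRecOn (C := fun m => Ω.obj n ⟶ Ω.obj m) h (fun {l} g => g ≫ Ω.map l) (𝟙 _)

/-- An ind-object is universal if every object of `C` embeds into it. -/
def Universal (Ω : IndObject C) : Prop :=
  ∀ X : C, ∃ n : ℕ, Nonempty (X ⟶ Ω.obj n)

/-- An ind-object is f-injective if every embedding of an object of `C` into it extends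
along any morphism of `C`. -/
def FInjective (Ω : IndObject C) : Prop :=
  ∀ ⦃X Y : C⦄ (α : X ⟶ Y) (n : ℕ) (γ : X ⟶ Ω.obj n),
    ∃ (m : ℕ) (h : n ≤ m) (β : Y ⟶ Ω.obj m), α ≫ β = γ ≫ Ω.trans h

end IndObject


/-- An isomorphism of ind-objects: compatible families of morphisms in both directions
whose composites are the transition maps. -/
structure IndIso {C : Type u} [Category.{v} C] (Ω Ω' : IndObject C) where
  a : ℕ → ℕ
  b : ℕ → ℕ
  amono : Monotone a
  bmono : Monotone b
  fwd : ∀ n : ℕ, Ω.obj n ⟶ Ω'.obj (a n)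
  bwd : ∀ n : ℕ, Ω'.obj n ⟶ Ω.obj (b n)
  fwd_comm : ∀ {n m : ℕ} (h : n ≤ m), Ω.trans h ≫ fwd m = fwd n ≫ Ω'.trans (amono h)
  bwd_comm : ∀ {n m : ℕ} (h : n ≤ m), Ω'.trans h ≫ bwd m = bwd n ≫ Ω.trans (bmono h)
  le_ba : ∀ n : ℕ, n ≤ b (a n)
  le_ab : ∀ n : ℕ, n ≤ a (b n)
  fwd_bwd : ∀ n : ℕ, fwd n ≫ bwd (a n) = Ω.trans (le_ba n)
  bwd_fwd : ∀ n : ℕ, bwd n ≫ fwd (b n) = Ω'.trans (le_ab n)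


/-- An ind-object is homogeneous if every isomorphism `γ : X ≅ Y` of objects of `C`
equipped with embeddings into the ind-object can be intertwined by an automorphism. -/
def Homogeneous {C : Type u} [Category.{v} C] (Ω : IndObject C) : Prop :=
  ∀ ⦃X Y : C⦄ (γ : X ≅ Y) (n m : ℕ) (α : X ⟶ Ω.obj n) (β : Y ⟶ Ω.obj m),
    ∃ (σ : IndIso Ω Ω) (h : m ≤ σ.a n), α ≫ σ.fwd n = γ.hom ≫ β ≫ Ω.trans h

/-!
Homogeneity gives f-injectivity: to extend an embedding `γ : X ⟶ Ωₙ` along `α : X ⟶ Y`, embed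
`Y` somewhere by universality and move the induced embedding of `X` onto `γ` by an automorphism.
Conversely, f-injectivity lets one extend a map between two levels back and forth,
`Ω_{p₀} ⟶ Ω_{q₀} ⟶ Ω_{p₁} ⟶ Ω_{q₁} ⟶ ⋯`, so that every two consecutive arrows compose to a
transition map; the two interleaved families are then mutually inverse morphisms of ind-objects.
-/

namespace IndObject

variable {C : Type u} [Category.{v} C]

lemma trans_self (Ω : IndObject C) {n : ℕ} (h : n ≤ n) : Ω.trans h = 𝟙 _ :=
  Nat.leRecOn_self _

lemma trans_succ (Ω : IndObject C) {n m : ℕ} (h : n ≤ m) (h' : n ≤ m + 1) :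
    Ω.trans h' = Ω.trans h ≫ Ω.map m :=
  Nat.leRecOn_succ h _

lemma trans_comp_trans (Ω : IndObject C) {n m l : ℕ} (h₁ : n ≤ m) (h₂ : m ≤ l) :
    Ω.trans h₁ ≫ Ω.trans h₂ = Ω.trans (h₁.trans h₂) := by
  induction l, h₂ using Nat.le_induction with
  | base => rw [trans_self, Category.comp_id]
  | succ l hl ih => rw [trans_succ Ω hl, trans_succ Ω (h₁.trans hl), ← Category.assoc, ih]

lemma trans_comp_trans_assoc (Ω : IndObject C) {n m l : ℕ} (h₁ : n ≤ m) (h₂ : m ≤ l)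
    {Z : C} (x : Ω.obj l ⟶ Z) :
    Ω.trans h₁ ≫ Ω.trans h₂ ≫ x = Ω.trans (h₁.trans h₂) ≫ x := by
  rw [← Category.assoc, trans_comp_trans]

lemma map_comp_trans (Ω : IndObject C) {n m : ℕ} (h : n + 1 ≤ m) :
    Ω.map n ≫ Ω.trans h = Ω.trans (n.le_succ.trans h) := by
  rw [← Category.id_comp (Ω.map n), ← trans_self Ω le_rfl, ← trans_succ Ω le_rfl n.le_succ, trans_comp_trans]

lemma trans_comp_eq_comp_trans {Ω Ω' : IndObject C} {p q : ℕ → ℕ} (hp : Monotone p)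
    (hq : Monotone q) (φ : ∀ k, Ω.obj (p k) ⟶ Ω'.obj (q k))
    (hφ : ∀ k, Ω.trans (hp k.le_succ) ≫ φ (k + 1) = φ k ≫ Ω'.trans (hq k.le_succ))
    {k l : ℕ} (h : k ≤ l) : Ω.trans (hp h) ≫ φ l = φ k ≫ Ω'.trans (hq h) := by
  induction l, h using Nat.le_induction with
  | base => rw [trans_self, trans_self, Category.id_comp, Category.comp_id]
  | succ l hl ih =>
    calc Ω.trans (hp (hl.trans l.le_succ)) ≫ φ (l + 1)
        = Ω.trans (hp hl) ≫ Ω.trans (hp l.le_succ) ≫ φ (l + 1) := by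
          rw [trans_comp_trans_assoc]
      _ = (Ω.trans (hp hl) ≫ φ l) ≫ Ω'.trans (hq l.le_succ) := by rw [hφ, Category.assoc]
      _ = φ k ≫ Ω'.trans (hq (hl.trans l.le_succ)) := by
          rw [ih, Category.assoc, trans_comp_trans]

structure Zigzag (Ω Ω' : IndObject C) where
  p : ℕ → ℕ
  q : ℕ → ℕ
  p_strictMono : StrictMono p
  q_strictMono : StrictMono q
  f : ∀ k, Ω.obj (p k) ⟶ Ω'.obj (q k)
  g : ∀ k, Ω'.obj (q k) ⟶ Ω.obj (p (k + 1))
  f_g : ∀ k, f k ≫ g k = Ω.trans (p_strictMono.monotone k.le_succ)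
  g_f : ∀ k, g k ≫ f (k + 1) = Ω'.trans (q_strictMono.monotone k.le_succ)

namespace Zigzag

variable {Ω Ω' : IndObject C} (Z : Zigzag Ω Ω')

lemma trans_comp_f {k l : ℕ} (h : k ≤ l) :
    Ω.trans (Z.p_strictMono.monotone h) ≫ Z.f l = Z.f k ≫ Ω'.trans (Z.q_strictMono.monotone h) :=
  trans_comp_eq_comp_trans _ _ Z.f (fun k => by rw [← Z.f_g, Category.assoc, Z.g_f]) h

lemma trans_comp_g {k l : ℕ} (h : k ≤ l) :
    Ω'.trans (Z.q_strictMono.monotone h) ≫ Z.g l =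
      Z.g k ≫ Ω.trans (Z.p_strictMono.monotone (Nat.succ_le_succ h)) :=
  trans_comp_eq_comp_trans Z.q_strictMono.monotone
    (fun _ _ h => Z.p_strictMono.monotone (Nat.succ_le_succ h)) Z.g
    (fun k => by rw [← Z.g_f, Category.assoc, Z.f_g]) h

lemma f_comp_trans_comp_g {k l : ℕ} (h : k ≤ l) :
    Z.f k ≫ Ω'.trans (Z.q_strictMono.monotone h) ≫ Z.g l =
      Ω.trans (Z.p_strictMono.monotone (h.trans l.le_succ)) := by
  rw [← Category.assoc, ← Z.trans_comp_f h, Category.assoc, Z.f_g, trans_comp_trans]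

lemma g_comp_trans_comp_f {k l : ℕ} (h : k + 1 ≤ l) :
    Z.g k ≫ Ω.trans (Z.p_strictMono.monotone h) ≫ Z.f l =
      Ω'.trans (Z.q_strictMono.monotone (k.le_succ.trans h)) := by
  rw [Z.trans_comp_f h, ← Category.assoc, Z.g_f, trans_comp_trans]

def toIndIso : IndIso Ω Ω' where
  a := Z.q
  b k := Z.p (k + 1)
  amono := Z.q_strictMono.monotone
  bmono _ _ h := Z.p_strictMono.monotone (Nat.succ_le_succ h)
  fwd k := Ω.trans Z.p_strictMono.le_apply ≫ Z.f k
  bwd k := Ω'.trans Z.q_strictMono.le_apply ≫ Z.g k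
  fwd_comm h := by
    rw [trans_comp_trans_assoc, ← trans_comp_trans_assoc _ Z.p_strictMono.le_apply (Z.p_strictMono.monotone h),
      Z.trans_comp_f h, Category.assoc]
  bwd_comm h := by
    rw [trans_comp_trans_assoc, ← trans_comp_trans_assoc _ Z.q_strictMono.le_apply (Z.q_strictMono.monotone h),
      Z.trans_comp_g h, Category.assoc]
  le_ba k := Z.q_strictMono.le_apply.trans (Nat.le_succ _ |>.trans Z.p_strictMono.le_apply)
  le_ab k := k.le_succ.trans (Z.p_strictMono.le_apply.trans Z.q_strictMono.le_apply)
  fwd_bwd k := by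
    rw [Category.assoc, Z.f_comp_trans_comp_g Z.q_strictMono.le_apply, trans_comp_trans]
  bwd_fwd k := by
    rw [Category.assoc, Z.g_comp_trans_comp_f Z.p_strictMono.le_apply, trans_comp_trans]

end Zigzag

structure LevelHom (Ω Ω' : IndObject C) where
  p : ℕ
  q : ℕ
  f : Ω.obj p ⟶ Ω'.obj q

variable {Ω Ω' : IndObject C}

lemma FInjective.exists_zigzag_step (hΩ : Ω.FInjective) (hΩ' : Ω'.FInjective)
    (s : LevelHom Ω Ω') :
    ∃ (t : LevelHom Ω Ω') (hp : s.p < t.p) (hq : s.q < t.q) (g : Ω'.obj s.q ⟶ Ω.obj t.p),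
      s.f ≫ g = Ω.trans hp.le ∧ g ≫ t.f = Ω'.trans hq.le := by
  obtain ⟨p', hp', g, hg⟩ := hΩ s.f (s.p + 1) (Ω.map s.p)
  obtain ⟨q', hq', f', hf'⟩ := hΩ' g (s.q + 1) (Ω'.map s.q)
  exact ⟨⟨p', q', f'⟩, hp', hq', g, by rw [hg, map_comp_trans], by rw [hf', map_comp_trans]⟩

theorem FInjective.exists_indIso_extend (hΩ : Ω.FInjective) (hΩ' : Ω'.FInjective) {n m : ℕ}
    (f : Ω.obj n ⟶ Ω'.obj m) :
    ∃ (σ : IndIso Ω Ω') (h : m ≤ σ.a n), σ.fwd n = f ≫ Ω'.trans h := by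
  choose next hp hq g hfg hgf using hΩ.exists_zigzag_step hΩ'
  let s : ℕ → LevelHom Ω Ω' := fun k => Nat.rec ⟨n, m, f⟩ (fun _ => next) k
  let Z : Zigzag Ω Ω' :=
    { p := fun k => (s k).p
      q := fun k => (s k).q
      p_strictMono := strictMono_nat_of_lt_succ fun k => hp (s k)
      q_strictMono := strictMono_nat_of_lt_succ fun k => hq (s k)
      f := fun k => (s k).f
      g := fun k => g (s k)
      f_g := fun k => hfg (s k)
      g_f := fun k => hgf (s k) }
  exact ⟨Z.toIndIso, Z.q_strictMono.monotone n.zero_le, Z.trans_comp_f n.zero_le⟩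

theorem FInjective.homogeneous (hΩ : Ω.FInjective) : Homogeneous Ω := by
  intro X Y γ n m α β
  obtain ⟨m₀, hm₀, f₀, hf₀⟩ := hΩ α m (γ.hom ≫ β)
  obtain ⟨σ, h, hσ⟩ := hΩ.exists_indIso_extend hΩ f₀
  refine ⟨σ, hm₀.trans h, ?_⟩
  rw [hσ, ← Category.assoc, hf₀, Category.assoc, Category.assoc, trans_comp_trans]

end IndObject

theorem Homogeneous.fInjective {C : Type u} [Category.{v} C] {Ω : IndObject C}
    (hΩ : Homogeneous Ω) (huniv : Ω.Universal) : Ω.FInjective := by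
  intro X Y α n γ
  obtain ⟨m, ⟨δ⟩⟩ := huniv Y
  obtain ⟨σ, h, hσ⟩ := hΩ (Iso.refl X) m n (α ≫ δ) γ
  refine ⟨σ.a m, h, δ ≫ σ.fwd m, ?_⟩
  rw [← Category.assoc, hσ, Iso.refl_hom, Category.id_comp]

theorem stmt_11_general (C : Type u) [Category.{v} C] (Ω : IndObject C) (huniv : Ω.Universal) :
    Ω.FInjective ↔ Homogeneous Ω :=
  ⟨IndObject.FInjective.homogeneous, fun h => h.fInjective huniv⟩

/-- a universal ind-object of a category with all morphisms monic is
f-injective iff it is homogeneous. -/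
theorem stmt_11 (C : Type u) [Category.{v} C]
    (hmono : ∀ {X Y : C} (f : X ⟶ Y), Mono f)
    (Ω : IndObject C) (huniv : Ω.Universal) :
    Ω.FInjective ↔ Homogeneous Ω :=
  stmt_11_general C Ω huniv
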